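/- Let f be a C^1 nonnegative function on [t0, ∞) with t0 > 0 such that A := ∫_{t0}^∞ f(t) dt < ∞, and suppose f'(t) ≤ a(t) f(t) for all t ≥ t0, where a is nonnegative with B := ∫_{t0}^∞ a(t) dt < ∞. Then for all t ≥ t0, f(t) ≤ ((t0 · f(t0) + 1) · exp(A + B) − 1) / t. -/

import Mathlib

/-!
The function `g t = t * f t + 1` is positive and satisfies `g' = f + t f' ≤ f + t a f ≤ (f + a) g`,
so `log g` grows on `[t₀, t]` by at most `∫ (f + a) ≤ A + B`. Exponentiating gives
`t f(t) + 1 ≤ (t₀ f(t₀) + 1) e^{A + B}`.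
-/

open MeasureTheory Set Real

theorem le_mul_exp_integral_of_hasDerivAt_le_mul {g g' k : ℝ → ℝ} {a b : ℝ} (hab : a ≤ b)
    (hpos : ∀ x ∈ Icc a b, 0 < g x) (hderiv : ∀ x ∈ Icc a b, HasDerivAt g (g' x) x)
    (hk : IntegrableOn k (Icc a b)) (hle : ∀ x ∈ Icc a b, g' x ≤ k x * g x) :
    g b ≤ g a * exp (∫ x in a..b, k x) := by
  have hlog : ∀ x ∈ Icc a b, HasDerivAt (fun y => log (g y)) (g' x / g x) x :=
    fun x hx => (hderiv x hx).log (hpos x hx).ne'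
  -- This one-sided FTC needs no integrability of the derivative `g' / g`, only of its bound `k`.
  have hlog_growth : log (g b) - log (g a) ≤ ∫ x in a..b, k x :=
    intervalIntegral.sub_le_integral_of_hasDeriv_right_of_le hab
      (fun x hx => (hlog x hx).continuousAt.continuousWithinAt)
      (fun x hx => (hlog x (Ioo_subset_Icc_self hx)).hasDerivWithinAt) hk
      (fun x hx => (div_le_iff₀ (hpos x (Ioo_subset_Icc_self hx))).2 (hle x (Ioo_subset_Icc_self hx)))
  calc g b = exp (log (g b)) := (exp_log (hpos b ⟨hab, le_rfl⟩)).symm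
    _ ≤ exp (log (g a) + ∫ x in a..b, k x) := exp_le_exp.2 (by linarith)
    _ = g a * exp (∫ x in a..b, k x) := by rw [exp_add, exp_log (hpos a ⟨le_rfl, hab⟩)]

theorem intervalIntegral_le_setIntegral_Ici {f : ℝ → ℝ} {a b : ℝ} (hab : a ≤ b)
    (hf : IntegrableOn f (Ici a)) (hf_nonneg : ∀ x, a ≤ x → 0 ≤ f x) :
    ∫ x in a..b, f x ≤ ∫ x in Ici a, f x := by
  rw [intervalIntegral.integral_of_le hab]
  exact setIntegral_mono_set hf ((ae_restrict_mem measurableSet_Ici).mono hf_nonneg)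
    (Ioc_subset_Icc_self.trans Icc_subset_Ici_self).eventuallyLE

theorem add_mul_le_add_mul_mul_add_one {s x x' c : ℝ} (hs : 0 ≤ s) (hx : 0 ≤ x) (hc : 0 ≤ c)
    (hx' : x' ≤ c * x) : x + s * x' ≤ (x + c) * (s * x + 1) := by
  nlinarith [mul_le_mul_of_nonneg_left hx' hs, mul_nonneg hs (mul_nonneg hx hx)]

theorem stmt_0_general (f f' a : ℝ → ℝ) (t0 A B : ℝ) (ht0 : 0 < t0)
    (hf_nonneg : ∀ t, t0 ≤ t → 0 ≤ f t)
    (hderiv : ∀ t, t0 ≤ t → HasDerivAt f (f' t) t)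
    (hfint : IntegrableOn f (Ici t0))
    (hA : ∫ t in Ici t0, f t = A)
    (ha_nonneg : ∀ t, t0 ≤ t → 0 ≤ a t)
    (haint : IntegrableOn a (Ici t0))
    (hB : ∫ t in Ici t0, a t = B)
    (hineq : ∀ t, t0 ≤ t → f' t ≤ a t * f t) :
    ∀ t, t0 ≤ t → f t ≤ ((t0 * f t0 + 1) * Real.exp (A + B) - 1) / t := by
  intro t ht
  have hs_pos : ∀ s, t0 ≤ s → 0 < s := fun s hs => ht0.trans_le hs
  have hg_pos : ∀ s, t0 ≤ s → 0 < s * f s + 1 := fun s hs => by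
    have := mul_nonneg (hs_pos s hs).le (hf_nonneg s hs)
    linarith
  have hfint' : IntegrableOn f (Icc t0 t) := hfint.mono_set Icc_subset_Ici_self
  have haint' : IntegrableOn a (Icc t0 t) := haint.mono_set Icc_subset_Ici_self
  have hgrowth : t * f t + 1 ≤ (t0 * f t0 + 1) * exp (∫ s in t0..t, (f s + a s)) :=
    le_mul_exp_integral_of_hasDerivAt_le_mul (g := fun s => s * f s + 1)
      (g' := fun s => 1 * f s + s * f' s) ht (fun s hs => hg_pos s hs.1)
      (fun s hs => ((hasDerivAt_id s).mul (hderiv s hs.1)).add_const 1) (hfint'.add haint')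
      fun s hs => by
        simpa only [one_mul] using add_mul_le_add_mul_mul_add_one (hs_pos s hs.1).le
          (hf_nonneg s hs.1) (ha_nonneg s hs.1) (hineq s hs.1)
  have hintegral : ∫ s in t0..t, (f s + a s) ≤ A + B := by
    rw [intervalIntegral.integral_add
      ((intervalIntegrable_iff_integrableOn_Icc_of_le ht).2 hfint')
      ((intervalIntegrable_iff_integrableOn_Icc_of_le ht).2 haint'), ← hA, ← hB]
    exact add_le_add (intervalIntegral_le_setIntegral_Ici ht hfint hf_nonneg)
      (intervalIntegral_le_setIntegral_Ici ht haint ha_nonneg)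
  have hbound : t * f t + 1 ≤ (t0 * f t0 + 1) * exp (A + B) :=
    hgrowth.trans (mul_le_mul_of_nonneg_left (exp_le_exp.2 hintegral) (hg_pos t0 le_rfl).le)
  rw [le_div_iff₀ (hs_pos t ht)]
  linarith

/-- Deckelnick-type differential inequality lemma. -/
theorem stmt_0 (f f' a : ℝ → ℝ) (t0 A B : ℝ) (ht0 : 0 < t0)
    (hf_nonneg : ∀ t, t0 ≤ t → 0 ≤ f t)
    (hderiv : ∀ t, t0 ≤ t → HasDerivAt f (f' t) t)
    (hf'cont : ContinuousOn f' (Ici t0))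
    (hfint : IntegrableOn f (Ici t0))
    (hA : ∫ t in Ici t0, f t = A)
    (ha_nonneg : ∀ t, t0 ≤ t → 0 ≤ a t)
    (haint : IntegrableOn a (Ici t0))
    (hB : ∫ t in Ici t0, a t = B)
    (hineq : ∀ t, t0 ≤ t → f' t ≤ a t * f t) :
    ∀ t, t0 ≤ t → f t ≤ ((t0 * f t0 + 1) * Real.exp (A + B) - 1) / t :=
  stmt_0_general f f' a t0 A B ht0 hf_nonneg hderiv hfint hA ha_nonneg haint hB hineq
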